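/- arXiv:1507.01101 — 7 statements merged into one kernel-verified Lean document; each statement's English description precedes it below -/
import Mathlib

section
/- Let c_1, …, c_n be positive real numbers, let C = (1/2)·Σ_{i=1}^n c_i, and for each i define the utility function f_i(x) = min(x, c_i). Then there exists a subset S ⊆ {1,…,n} with Σ_{i∈S} c_i = Σ_{i∉S} c_i if and only if there exists a valid assignment of the n threads to two servers, i.e., a map r : {1,…,n} → {1,2} and allocations a_i ≥ 0 with Σ_{i : r_i = 1} a_i ≤ C and Σ_{i : r_i = 2} a_i ≤ C, whose total utility Σ_{i=1}^n min(a_i, c_i) equals Σ_{i=1}^n c_i. -/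
/-- Correctness of the reduction from the partition problem to the AA problem
with two servers: the numbers `c i` can be partitioned into two sets of equal
sum iff there is a valid assignment of the `n` threads (with utility functions
`x ↦ min x (c i)`) to two servers of capacity `C = (1/2) Σ c i` achieving total
utility `Σ c i`. -/
theorem partition_reduction (n : ℕ) (c : Fin n → ℝ) (hc : ∀ i, 0 < c i)
    (C : ℝ) (hC : C = (1 / 2) * ∑ i, c i) :
    (∃ S : Finset (Fin n), ∑ i ∈ S, c i = ∑ i ∈ Sᶜ, c i) ↔
    (∃ (r : Fin n → Fin 2) (a : Fin n → ℝ),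
      (∀ i, 0 ≤ a i) ∧
      (∀ j : Fin 2, ∑ i ∈ Finset.univ.filter (fun i => r i = j), a i ≤ C) ∧
      ∑ i, min (a i) (c i) = ∑ i, c i) := by
  have hsplit : ∀ S : Finset (Fin n),
      ∑ i ∈ S, c i + ∑ i ∈ Sᶜ, c i = ∑ i, c i := fun S =>
    Finset.sum_add_sum_compl S c
  constructor
  · rintro ⟨S, hS⟩
    refine ⟨fun i => if i ∈ S then 0 else 1, c, fun i => (hc i).le, ?_, ?_⟩
    · intro j
      have h0 : Finset.univ.filter
          (fun i => (if i ∈ S then (0 : Fin 2) else 1) = 0) = S := by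
        ext i; by_cases h : i ∈ S <;> simp [h]
      have h1 : Finset.univ.filter
          (fun i => (if i ∈ S then (0 : Fin 2) else 1) = 1) = Sᶜ := by
        ext i; by_cases h : i ∈ S <;> simp [h]
      have hsum := hsplit S
      fin_cases j
      · simp only [Fin.mk_zero, h0]; linarith
      · simp only [Fin.mk_one, h1]; linarith
    · simp
  · rintro ⟨r, a, ha, hcap, hutil⟩
    have hle : ∀ i ∈ Finset.univ, min (a i) (c i) ≤ c i := fun i _ =>
      min_le_right _ _
    have heq : ∀ i ∈ Finset.univ, min (a i) (c i) = c i :=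
      (Finset.sum_eq_sum_iff_of_le hle).mp hutil
    have hge : ∀ i, c i ≤ a i := fun i =>
      min_eq_right_iff.mp (heq i (Finset.mem_univ i))
    refine ⟨Finset.univ.filter (fun i => r i = 0), ?_⟩
    have hcompl : (Finset.univ.filter (fun i => r i = 0))ᶜ =
        Finset.univ.filter (fun i => r i = 1) := by
      ext i
      simp only [Finset.mem_compl, Finset.mem_filter, Finset.mem_univ,
        true_and]
      omega
    have hb0 : ∑ i ∈ Finset.univ.filter (fun i => r i = 0), c i ≤ C :=
      le_trans (Finset.sum_le_sum (fun i _ => hge i)) (hcap 0)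
    have hb1 : ∑ i ∈ Finset.univ.filter (fun i => r i = 1), c i ≤ C :=
      le_trans (Finset.sum_le_sum (fun i _ => hge i)) (hcap 1)
    have hsum := hsplit (Finset.univ.filter (fun i => r i = 0))
    rw [hcompl] at hsum ⊢
    linarith
end

section
/- Let c_1, …, c_n be positive real numbers, let C = (1/2)·Σ_{i=1}^n c_i, and for each i define the utility function f_i(x) = min(x, c_i). Suppose r : {1,…,n} → {1,2} and a_i ≥ 0 form a valid assignment to two servers of capacity C (Σ_{i : r_i = 1} a_i ≤ C and Σ_{i : r_i = 2} a_i ≤ C) whose total utility satisfies Σ_{i=1}^n min(a_i, c_i) = Σ_{i=1}^n c_i. Then a_i = c_i for every i, and moreover Σ_{i : r_i = 1} c_i = Σ_{i : r_i = 2} c_i = C. -/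
/-- Key intermediate claim in the NP-hardness proof: if a valid assignment of
the `n` threads (with utility functions `x ↦ min x (c i)`) to two servers of
capacity `C = (1/2) Σ c i` achieves total utility `Σ c i`, then every thread
receives exactly `c i` resources, and the threads assigned to each of the two
servers have `c`-values summing to exactly `C`. -/
theorem partition_reduction_forced (n : ℕ) (c : Fin n → ℝ) (hc : ∀ i, 0 < c i)
    (C : ℝ) (hC : C = (1 / 2) * ∑ i, c i)
    (r : Fin n → Fin 2) (a : Fin n → ℝ)
    (ha : ∀ i, 0 ≤ a i)
    (hvalid : ∀ j : Fin 2, ∑ i ∈ Finset.univ.filter (fun i => r i = j), a i ≤ C)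
    (hutil : ∑ i, min (a i) (c i) = ∑ i, c i) :
    (∀ i, a i = c i) ∧
    (∀ j : Fin 2, ∑ i ∈ Finset.univ.filter (fun i => r i = j), c i = C) := by
  -- Step 1: min (a i) (c i) = c i for each i, hence c i ≤ a i
  have hmin : ∀ i ∈ Finset.univ, min (a i) (c i) = c i := by
    rw [← Finset.sum_eq_sum_iff_of_le (fun i _ => min_le_right (a i) (c i))]
    exact hutil
  have hle : ∀ i, c i ≤ a i := fun i => min_eq_right_iff.mp (hmin i (Finset.mem_univ i))
  -- Step 2: total of a is at most 2C = Σ c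
  have hsplit : ∀ f : Fin n → ℝ,
      ∑ j : Fin 2, ∑ i ∈ Finset.univ.filter (fun i => r i = j), f i = ∑ i, f i := by
    intro f
    exact Finset.sum_fiberwise_eq_sum_filter Finset.univ Finset.univ r f ▸ by
      simp [Finset.sum_fiberwise]
  have hsum_a : ∑ i, a i ≤ ∑ i, c i := by
    rw [← hsplit a, Fin.sum_univ_two]
    have := hvalid 0
    have := hvalid 1
    linarith [hvalid 0, hvalid 1]
  have hsum_c : ∑ i, c i ≤ ∑ i, a i := Finset.sum_le_sum (fun i _ => hle i)
  have heq : ∀ i ∈ Finset.univ, c i = a i :=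
    (Finset.sum_eq_sum_iff_of_le (fun i _ => hle i)).mp (le_antisymm hsum_c hsum_a)
  have hac : ∀ i, a i = c i := fun i => (heq i (Finset.mem_univ i)).symm
  refine ⟨hac, ?_⟩
  -- Step 3: each server's c-sum equals C
  have hv : ∀ j : Fin 2, ∑ i ∈ Finset.univ.filter (fun i => r i = j), c i ≤ C := by
    intro j
    calc ∑ i ∈ Finset.univ.filter (fun i => r i = j), c i
        = ∑ i ∈ Finset.univ.filter (fun i => r i = j), a i :=
          Finset.sum_congr rfl (fun i _ => (hac i).symm)
      _ ≤ C := hvalid j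
  have htot : ∑ j : Fin 2, ∑ i ∈ Finset.univ.filter (fun i => r i = j), c i = 2 * C := by
    rw [hsplit c, hC]; ring
  rw [Fin.sum_univ_two] at htot
  rw [Fin.forall_fin_two]
  constructor <;> linarith [hv 0, hv 1]
end

section
/- Let m ≥ 1 and let E and U be disjoint finite sets with |E| + |U| = m. Suppose given nonnegative reals c_i for i ∈ E, nonnegative reals C_j for j ∈ U, and nonnegative reals ĉ_i for i ∈ E, such that c_i ≥ C_j for all i ∈ E and j ∈ U, and Σ_{i∈E} c_i + Σ_{j∈U} C_j = Σ_{i∈E} ĉ_i. Then Σ_{i∈E} c_i ≥ (|E|/m) Σ_{i∈E} ĉ_i. -/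
/-- Combinatorial core of the lemma bounding the unfull threads' allocation:
if `E` (unfull threads) and `U` (servers with only full threads) are disjoint
with `|E| + |U| = m`, each allocation `c i` (for `i ∈ E`) is at least each
leftover capacity `Cap j` (for `j ∈ U`), and
`Σ_{i∈E} c i + Σ_{j∈U} Cap j = Σ_{i∈E} chat i`, then
`Σ_{i∈E} c i ≥ (|E|/m) Σ_{i∈E} chat i`. -/
theorem unfull_allocation_bound {ι : Type*} (m : ℕ) (hm : 1 ≤ m)
    (E U : Finset ι) (hdisj : Disjoint E U) (hcard : E.card + U.card = m)
    (c chat : ι → ℝ) (Cap : ι → ℝ)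
    (hc : ∀ i ∈ E, 0 ≤ c i) (hCap : ∀ j ∈ U, 0 ≤ Cap j)
    (hchat : ∀ i ∈ E, 0 ≤ chat i)
    (hge : ∀ i ∈ E, ∀ j ∈ U, Cap j ≤ c i)
    (hsum : ∑ i ∈ E, c i + ∑ j ∈ U, Cap j = ∑ i ∈ E, chat i) :
    ∑ i ∈ E, c i ≥ ((E.card : ℝ) / m) * ∑ i ∈ E, chat i := by
  set S := ∑ i ∈ E, c i with hS
  set T := ∑ j ∈ U, Cap j with hT
  have hSnn : 0 ≤ S := Finset.sum_nonneg hc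
  have hmpos : (0 : ℝ) < m := by exact_mod_cast hm
  -- key: |U| * S ≥ |E| * T
  have key : (E.card : ℝ) * T ≤ (U.card : ℝ) * S := by
    have h1 : ∀ i ∈ E, T ≤ (U.card : ℝ) * c i := by
      intro i hi
      calc T = ∑ j ∈ U, Cap j := rfl
        _ ≤ ∑ _j ∈ U, c i := Finset.sum_le_sum (fun j hj => hge i hi j hj)
        _ = (U.card : ℝ) * c i := by rw [Finset.sum_const, nsmul_eq_mul]
    calc (E.card : ℝ) * T = ∑ _i ∈ E, T := by rw [Finset.sum_const, nsmul_eq_mul]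
      _ ≤ ∑ i ∈ E, (U.card : ℝ) * c i := Finset.sum_le_sum h1
      _ = (U.card : ℝ) * S := by rw [← Finset.mul_sum]
  have hmain : (E.card : ℝ) * (S + T) ≤ (m : ℝ) * S := by
    have : ((E.card : ℝ) + U.card) = (m : ℝ) := by exact_mod_cast hcard
    nlinarith
  rw [ge_iff_le, div_mul_eq_mul_div, div_le_iff₀ hmpos, ← hsum]
  linarith [hmain]
end

section
/- Let A > 0, d > 0, and 0 < a_1 ≤ a_2 ≤ … ≤ a_n. Let z_1, …, z_n ∈ [0,d] and set β = (A + Σ_{i=1}^n a_i z_i)/(A + Σ_{i=1}^n z_i). Then β ≥ min over j = 1, …, n of min( (A + d·Σ_{i=1}^j a_i)/(A + j·d), 1 ). -/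
/-- Lower bound on the ratio `β = (A + Σ aᵢzᵢ)/(A + Σ zᵢ)` for positive
nondecreasing coefficients `aᵢ` and `zᵢ ∈ [0,d]`: it is at least the minimum
over prefixes `j = 1,…,n` of `min((A + d·Σ_{i≤j} aᵢ)/(A + j·d), 1)`. -/
theorem beta_lower_bound (n : ℕ) (hn : 1 ≤ n) (A d : ℝ) (hA : 0 < A)
    (hd : 0 < d) (a z : ℕ → ℝ)
    (hapos : ∀ i < n, 0 < a i)
    (hamono : ∀ i j, i ≤ j → j < n → a i ≤ a j)
    (hz : ∀ i < n, z i ∈ Set.Icc 0 d) :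
    (A + ∑ i ∈ Finset.range n, a i * z i) / (A + ∑ i ∈ Finset.range n, z i) ≥
      (Finset.Icc 1 n).inf' (Finset.nonempty_Icc.mpr hn)
        (fun j => min ((A + d * ∑ i ∈ Finset.range j, a i) / (A + j * d)) 1) := by
  set m := (Finset.Icc 1 n).inf' (Finset.nonempty_Icc.mpr hn)
      (fun j => min ((A + d * ∑ i ∈ Finset.range j, a i) / (A + j * d)) 1) with hm
  have hm1 : m ≤ 1 := by
    have h1 : (1:ℕ) ∈ Finset.Icc 1 n := Finset.mem_Icc.mpr ⟨le_refl _, hn⟩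
    exact le_trans (Finset.inf'_le _ h1) (min_le_right _ _)
  have hzsum : 0 ≤ ∑ i ∈ Finset.range n, z i :=
    Finset.sum_nonneg fun i hi => (hz i (Finset.mem_range.mp hi)).1
  have hden : 0 < A + ∑ i ∈ Finset.range n, z i := by linarith
  rw [ge_iff_le, le_div_iff₀ hden]
  set T := (Finset.range n).filter (fun i => a i < m) with hT
  set k := T.card with hk
  have hTsub : T ⊆ Finset.range n := Finset.filter_subset _ _
  have hTrange : T = Finset.range k := by
    have hsub : T ⊆ Finset.range k := by
      intro t ht
      have htn : t < n := Finset.mem_range.mp (hTsub ht)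
      have h1 : Finset.Iic t ⊆ T := by
        intro i hi
        have hit : i ≤ t := Finset.mem_Iic.mp hi
        have ham := hamono i t hit htn
        have hat : a t < m := (Finset.mem_filter.mp ht).2
        exact Finset.mem_filter.mpr ⟨Finset.mem_range.mpr (lt_of_le_of_lt hit htn),
          lt_of_le_of_lt ham hat⟩
      have hc := Finset.card_le_card h1
      rw [Nat.card_Iic] at hc
      exact Finset.mem_range.mpr hc
    exact Finset.eq_of_subset_of_card_le hsub (by simp [hk])
  have hkn : k ≤ n := by
    have := Finset.card_le_card hTsub
    simpa using this
  -- key pointwise bound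
  have hkey : ∑ i ∈ T, (a i - m) * d ≤ ∑ i ∈ Finset.range n, (a i - m) * z i := by
    rw [← Finset.sum_filter_add_sum_filter_not (Finset.range n) (fun i => a i < m)
      (fun i => (a i - m) * z i)]
    have h1 : ∑ i ∈ T, (a i - m) * d ≤ ∑ i ∈ T, (a i - m) * z i := by
      apply Finset.sum_le_sum
      intro i hi
      have him : a i < m := (Finset.mem_filter.mp hi).2
      have hzi := hz i (Finset.mem_range.mp (hTsub hi))
      nlinarith [hzi.1, hzi.2]
    have h2 : (0:ℝ) ≤ ∑ i ∈ (Finset.range n).filter (fun i => ¬ a i < m),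
        (a i - m) * z i := by
      apply Finset.sum_nonneg
      intro i hi
      have him : ¬ a i < m := (Finset.mem_filter.mp hi).2
      have hzi := hz i (Finset.mem_range.mp (Finset.filter_subset _ _ hi))
      have : m ≤ a i := not_lt.mp him
      nlinarith [hzi.1]
    calc ∑ i ∈ T, (a i - m) * d ≤ ∑ i ∈ T, (a i - m) * z i := h1
      _ ≤ _ := by rw [hT]; linarith
  have hTval : ∑ i ∈ T, (a i - m) * d
      = d * (∑ i ∈ Finset.range k, a i) - (k : ℝ) * m * d := by
    rw [hTrange]
    simp only [sub_mul, Finset.sum_sub_distrib, Finset.sum_const, nsmul_eq_mul,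
      Finset.card_range, ← Finset.sum_mul]
    ring
  have hsumk : m * (A + (k : ℝ) * d) ≤ A + d * ∑ i ∈ Finset.range k, a i := by
    rcases Nat.eq_zero_or_pos k with hk0 | hk1
    · rw [hk0]
      simp
      nlinarith [hm1, hA]
    · have hkmem : k ∈ Finset.Icc 1 n := Finset.mem_Icc.mpr ⟨hk1, hkn⟩
      have hmk : m ≤ (A + d * ∑ i ∈ Finset.range k, a i) / (A + (k : ℝ) * d) :=
        le_trans (Finset.inf'_le _ hkmem) (min_le_left _ _)
      have hdenk : (0:ℝ) < A + (k : ℝ) * d :=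
        add_pos_of_pos_of_nonneg hA (mul_nonneg (Nat.cast_nonneg k) hd.le)
      exact (le_div_iff₀ hdenk).mp hmk
  have hsplit : ∑ i ∈ Finset.range n, (a i - m) * z i
      = (∑ i ∈ Finset.range n, a i * z i) - m * ∑ i ∈ Finset.range n, z i := by
    rw [Finset.mul_sum, ← Finset.sum_sub_distrib]
    apply Finset.sum_congr rfl
    intro i _
    ring
  nlinarith [hkey, hTval, hsumk, hsplit]
end

section
/- Let m ≥ 1 be an integer, γ > 0, and A ≥ m·γ. Let E be a finite set and for each i ∈ E let u_i ∈ [0, γ], ĉ_i > 0, and c_i ∈ [0, ĉ_i] be reals satisfying: (i) m·Σ_{i∈E} c_i ≥ |E|·Σ_{i∈E} ĉ_i, and (ii) for all i, j ∈ E, if u_i/ĉ_i > u_j/ĉ_j then c_i ≥ c_j. Then A + Σ_{i∈E} (u_i/ĉ_i)·c_i ≥ 2(√2 − 1)·(A + Σ_{i∈E} u_i). -/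
/-- Main approximation-ratio inequality: if `A ≥ m·γ`, each unfull thread
`i ∈ E` has super-optimal utility `u i ∈ [0,γ]`, super-optimal allocation
`chat i > 0` and actual allocation `c i ∈ [0, chat i]`, the unfull threads
receive at least an `|E|/m` fraction of their super-optimal resources, and
threads with larger slope `u i / chat i` receive at least as much resource,
then `A + Σ (u i / chat i)·c i ≥ 2(√2 − 1)·(A + Σ u i)`. -/
theorem approximation_ratio_inequality {ι : Type*} (m : ℕ) (hm : 1 ≤ m)
    (γ A : ℝ) (hγ : 0 < γ) (hA : (m : ℝ) * γ ≤ A)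
    (E : Finset ι) (u chat c : ι → ℝ)
    (hu : ∀ i ∈ E, u i ∈ Set.Icc 0 γ)
    (hchat : ∀ i ∈ E, 0 < chat i)
    (hc : ∀ i ∈ E, c i ∈ Set.Icc 0 (chat i))
    (hfrac : (m : ℝ) * ∑ i ∈ E, c i ≥ (E.card : ℝ) * ∑ i ∈ E, chat i)
    (hslope : ∀ i ∈ E, ∀ j ∈ E, u i / chat i > u j / chat j → c i ≥ c j) :
    A + ∑ i ∈ E, (u i / chat i) * c i ≥
      2 * (Real.sqrt 2 - 1) * (A + ∑ i ∈ E, u i) := by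
  have hr2 : (Real.sqrt 2) ^ 2 = 2 := Real.sq_sqrt (by norm_num)
  have hr1 : (1 : ℝ) ≤ Real.sqrt 2 := by
    nlinarith [Real.sqrt_nonneg 2]
  have hr15 : Real.sqrt 2 ≤ 3/2 := by
    nlinarith [Real.sqrt_nonneg 2]
  have hmγ : (0:ℝ) < (m:ℝ) * γ := by
    have : (1:ℝ) ≤ (m:ℝ) := by exact_mod_cast hm
    nlinarith
  have hApos : 0 < A := lt_of_lt_of_le hmγ hA
  set sl : ι → ℝ := fun i => u i / chat i with hsl
  -- basic positivity
  have hsl_nonneg : ∀ i ∈ E, 0 ≤ sl i := fun i hi =>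
    div_nonneg (hu i hi).1 (hchat i hi).le
  have hslc : ∀ i ∈ E, sl i * chat i = u i := fun i hi =>
    div_mul_cancel₀ (u i) (hchat i hi).ne'
  set U := ∑ i ∈ E, u i with hU
  have hUnn : 0 ≤ U := Finset.sum_nonneg fun i hi => (hu i hi).1
  -- Key bound: m * ∑ sl i * c i ≥ U^2 / γ
  have hkey : U ^ 2 / γ ≤ (m : ℝ) * ∑ i ∈ E, sl i * c i := by
    rcases E.eq_empty_or_nonempty with rfl | hne
    · simp [hU]
    -- Chebyshev: (∑ c)(∑ sl) ≤ card * ∑ c*sl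
    have hmono : MonovaryOn c sl E := by
      intro i hi j hj hij
      exact hslope j hj i hi hij
    have hcheb := hmono.sum_mul_sum_le_card_mul_sum
    -- Cauchy-Schwarz: (∑ √u)² ≤ (∑ sl)(∑ chat)
    have hCS := Finset.sum_sq_le_sum_mul_sum_of_sq_eq_mul E
      (r := fun i => Real.sqrt (u i)) (f := sl) (g := chat)
      hsl_nonneg (fun i hi => (hchat i hi).le)
      (fun i hi => by rw [Real.sq_sqrt (hu i hi).1, hslc i hi])
    -- √u i ≥ u i / √γ
    have hsqrtu : U / Real.sqrt γ ≤ ∑ i ∈ E, Real.sqrt (u i) := by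
      rw [hU, Finset.sum_div]
      refine Finset.sum_le_sum fun i hi => ?_
      rw [div_le_iff₀ (Real.sqrt_pos.2 hγ)]
      have h1 : u i = Real.sqrt (u i) ^ 2 := (Real.sq_sqrt (hu i hi).1).symm
      have h2 : Real.sqrt (u i) ≤ Real.sqrt γ := Real.sqrt_le_sqrt (hu i hi).2
      nlinarith [Real.sqrt_nonneg (u i)]
    -- combine: U²/γ ≤ (∑ √u)² ≤ (∑ sl)(∑ chat)
    have hUsq : U ^ 2 / γ ≤ (∑ i ∈ E, sl i) * ∑ i ∈ E, chat i := by
      have hs0 : 0 ≤ ∑ i ∈ E, Real.sqrt (u i) :=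
        Finset.sum_nonneg fun i hi => Real.sqrt_nonneg _
      have h3 : (U / Real.sqrt γ) ^ 2 ≤ (∑ i ∈ E, Real.sqrt (u i)) ^ 2 := by
        apply pow_le_pow_left₀ (by positivity) hsqrtu
      have h4 : (U / Real.sqrt γ) ^ 2 = U ^ 2 / γ := by
        rw [div_pow, Real.sq_sqrt hγ.le]
      linarith
    -- combine fraction condition
    have hcard : (0:ℝ) < E.card := by exact_mod_cast hne.card_pos
    have hSnn : 0 ≤ ∑ i ∈ E, sl i := Finset.sum_nonneg hsl_nonneg
    have hm0 : (0:ℝ) < m := by exact_mod_cast hm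
    -- (∑ sl)(∑ chat) ≤ (∑ sl) * (m/card) * ∑ c ≤ ... ≤ m * ∑ sl*c
    have h5 : (E.card : ℝ) * ((∑ i ∈ E, sl i) * ∑ i ∈ E, chat i)
        ≤ (E.card : ℝ) * ((m : ℝ) * ∑ i ∈ E, sl i * c i) := by
      calc (E.card : ℝ) * ((∑ i ∈ E, sl i) * ∑ i ∈ E, chat i)
          = (∑ i ∈ E, sl i) * ((E.card : ℝ) * ∑ i ∈ E, chat i) := by ring
        _ ≤ (∑ i ∈ E, sl i) * ((m : ℝ) * ∑ i ∈ E, c i) :=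
            mul_le_mul_of_nonneg_left hfrac hSnn
        _ = (m:ℝ) * ((∑ i ∈ E, c i) * ∑ i ∈ E, sl i) := by ring
        _ ≤ (m:ℝ) * ((E.card : ℝ) * ∑ i ∈ E, c i * sl i) :=
            mul_le_mul_of_nonneg_left hcheb hm0.le
        _ = (E.card : ℝ) * ((m : ℝ) * ∑ i ∈ E, sl i * c i) := by
            simp_rw [mul_comm (c _) (sl _)]; ring
    have h6 := le_of_mul_le_mul_left h5 hcard
    linarith
  -- final quadratic inequality
  have hsum_nn : 0 ≤ ∑ i ∈ E, sl i * c i :=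
    Finset.sum_nonneg fun i hi => mul_nonneg (hsl_nonneg i hi) (hc i hi).1
  have hkey' : U ^ 2 / ((m:ℝ) * γ) ≤ ∑ i ∈ E, sl i * c i := by
    rw [div_le_iff₀ hmγ]
    have := hkey
    rw [div_le_iff₀ hγ] at this
    calc U ^ 2 ≤ ((m:ℝ) * ∑ i ∈ E, sl i * c i) * γ := this
      _ = (∑ i ∈ E, sl i * c i) * ((m:ℝ) * γ) := by ring
  -- Need: A + T ≥ α (A + U) with T ≥ U²/(mγ), A ≥ mγ, α = 2(√2-1)
  have hT : U ^ 2 / ((m:ℝ) * γ) ≤ ∑ i ∈ E, sl i * c i := hkey'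
  set M := (m:ℝ) * γ with hM
  have h2 : 0 ≤ (1 - 2 * (Real.sqrt 2 - 1)) * ((A - M) * M) :=
    mul_nonneg (by nlinarith) (mul_nonneg (by linarith) hmγ.le)
  have hfin' : 0 ≤ A * M + U ^ 2 - 2 * (Real.sqrt 2 - 1) * (A + U) * M := by
    have hz : (Real.sqrt 2 ^ 2) * M ^ 2 = 2 * M ^ 2 := by rw [hr2]
    nlinarith [sq_nonneg (U - (Real.sqrt 2 - 1) * M), h2, hz]
  have hfin : A + U ^ 2 / M ≥ 2 * (Real.sqrt 2 - 1) * (A + U) := by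
    rw [ge_iff_le, ← sub_nonneg]
    have hq : (A + U ^ 2 / M - 2 * (Real.sqrt 2 - 1) * (A + U)) * M
        = A * M + U ^ 2 - 2 * (Real.sqrt 2 - 1) * (A + U) * M := by
      field_simp
    nlinarith [hfin', hmγ]
  calc A + ∑ i ∈ E, (u i / chat i) * c i = A + ∑ i ∈ E, sl i * c i := rfl
    _ ≥ A + U ^ 2 / M := by linarith
    _ ≥ 2 * (Real.sqrt 2 - 1) * (A + U) := hfin
end

section
/- Let m ≥ 1, C > 0, n ≥ m, and let f_1, …, f_n : [0,C] → ℝ be nonnegative, nondecreasing, and concave. Let ĉ ∈ [0,C]^n maximize Σ_{i=1}^n f_i(d_i) over all d ∈ [0,C]^n with Σ_{i=1}^n d_i ≤ mC, and suppose Σ_{i=1}^n ĉ_i = mC. Let c ∈ ℝ^n satisfy 0 ≤ c_i ≤ ĉ_i for all i; let D = {i : c_i = ĉ_i}, E = {1,…,n} \ D, and γ = max_{i∈E} f_i(ĉ_i) (γ = 0 if E is empty). Assume: (a) Σ_{i∈D} f_i(ĉ_i) ≥ m·γ; (b) m·Σ_{i∈E} c_i ≥ |E|·Σ_{i∈E}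 ĉ_i; (c) for all i, j ∈ E, if f_i(ĉ_i)/ĉ_i > f_j(ĉ_j)/ĉ_j then c_i ≥ c_j. Then for every valid assignment, i.e., every r' : {1,…,n} → {1,…,m} and c'_i ≥ 0 with Σ_{i : r'_i = j} c'_i ≤ C for each server j, we have Σ_{i=1}^n f_i(c_i) ≥ 2(√2 − 1)·Σ_{i=1}^n f_i(c'_i). -/
private lemma greedy_sqrt_aux (x g : ℝ) (hx : 0 ≤ x) (hxg : x ≤ g) :
    x ≤ Real.sqrt g * Real.sqrt x := by
  calc x = Real.sqrt x * Real.sqrt x := (Real.mul_self_sqrt hx).symm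
    _ ≤ Real.sqrt g * Real.sqrt x :=
      mul_le_mul_of_nonneg_right (Real.sqrt_le_sqrt hxg) (Real.sqrt_nonneg x)

private lemma greedy_cs_aux (se T P g : ℝ) (hse0 : 0 ≤ se)
    (h1 : se ≤ Real.sqrt g * T) (hT : 0 ≤ T) (h2 : T ^ 2 ≤ P) (hg : 0 ≤ g) :
    se ^ 2 ≤ g * P := by
  have hgs : Real.sqrt g ^ 2 = g := Real.sq_sqrt hg
  nlinarith [Real.sqrt_nonneg g, mul_nonneg (Real.sqrt_nonneg g) hT]

private lemma greedy_quad_aux (g sd se a : ℝ) (hg : 0 < g) (hgsd : g ≤ sd)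
    (hse : 0 ≤ se) (hsea : se ^ 2 ≤ g * a) :
    2 * (Real.sqrt 2 - 1) * (sd + se) ≤ sd + a := by
  have hs2 : Real.sqrt 2 ^ 2 = 2 := Real.sq_sqrt (by norm_num)
  have hs2nn : (0:ℝ) ≤ Real.sqrt 2 := Real.sqrt_nonneg 2
  have hs2ub : Real.sqrt 2 ≤ 1.5 := by nlinarith
  have h1 : 0 ≤ g * (sd - g) := mul_nonneg hg.le (sub_nonneg.2 hgsd)
  have hfin : g * (2 * (Real.sqrt 2 - 1) * (sd + se)) ≤ g * (sd + a) := by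
    nlinarith [sq_nonneg (se - (Real.sqrt 2 - 1) * g), sq_nonneg g,
      mul_nonneg (mul_nonneg hg.le hg.le) hs2nn]
  exact le_of_mul_le_mul_left hfin hg

/-- Approximation guarantee of the greedy algorithm, stated via the structural
properties of its output. `m` servers of capacity `C`, `n ≥ m` threads with
nonnegative, nondecreasing, concave utility functions `f i`; `chat` is a
super-optimal allocation using all `m·C` resources; `c` is an allocation with
`0 ≤ c i ≤ chat i`; `D` is the set of full threads (`c i = chat i`), `E` the
unfull threads, and `γ` the maximum of `f i (chat i)` over `E` (zero if `E` is
empty). Under hypotheses (a) `Σ_{D} f i (chat i) ≥ m·γ`,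
(b) `m·Σ_{E} c i ≥ |E|·Σ_{E} chat i`, and (c) threads in `E` with larger slope
`f i (chat i)/chat i` receive at least as much resource, the utility of `c` is
at least `2(√2 − 1)` times that of any valid assignment. -/
theorem greedy_approximation_guarantee (m n : ℕ) (hm : 1 ≤ m) (hn : m ≤ n)
    (C : ℝ) (hC : 0 < C) (f : Fin n → ℝ → ℝ)
    (hnonneg : ∀ i, ∀ x ∈ Set.Icc (0 : ℝ) C, 0 ≤ f i x)
    (hmono : ∀ i, MonotoneOn (f i) (Set.Icc (0 : ℝ) C))
    (hconc : ∀ i, ConcaveOn ℝ (Set.Icc (0 : ℝ) C) (f i))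
    (chat : Fin n → ℝ)
    (hchatmem : ∀ i, chat i ∈ Set.Icc 0 C)
    (hchatsum : ∑ i, chat i = m * C)
    (hchatmax : ∀ d : Fin n → ℝ, (∀ i, d i ∈ Set.Icc 0 C) → (∑ i, d i ≤ m * C) →
      ∑ i, f i (d i) ≤ ∑ i, f i (chat i))
    (c : Fin n → ℝ) (hc : ∀ i, 0 ≤ c i) (hcle : ∀ i, c i ≤ chat i)
    (D E : Finset (Fin n))
    (hD : ∀ i, i ∈ D ↔ c i = chat i)
    (hE : ∀ i, i ∈ E ↔ c i ≠ chat i)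
    (γ : ℝ)
    (hγub : ∀ i ∈ E, f i (chat i) ≤ γ)
    (hγmem : E.Nonempty → ∃ i ∈ E, γ = f i (chat i))
    (hγzero : E = ∅ → γ = 0)
    (ha : ∑ i ∈ D, f i (chat i) ≥ (m : ℝ) * γ)
    (hb : (m : ℝ) * ∑ i ∈ E, c i ≥ (E.card : ℝ) * ∑ i ∈ E, chat i)
    (hslope : ∀ i ∈ E, ∀ j ∈ E,
      f i (chat i) / chat i > f j (chat j) / chat j → c i ≥ c j) :
    ∀ (r' : Fin n → Fin m) (c' : Fin n → ℝ), (∀ i, 0 ≤ c' i) →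
      (∀ j : Fin m, ∑ i ∈ Finset.univ.filter (fun i => r' i = j), c' i ≤ C) →
      ∑ i, f i (c i) ≥ 2 * (Real.sqrt 2 - 1) * ∑ i, f i (c' i) := by
  intro r' c' hc'0 hc'cap
  set α : ℝ := 2 * (Real.sqrt 2 - 1) with hαdef
  have hs2 : Real.sqrt 2 ^ 2 = 2 := Real.sq_sqrt (by norm_num)
  have hs2nn : (0:ℝ) ≤ Real.sqrt 2 := Real.sqrt_nonneg 2
  have hs2lb : (1:ℝ) ≤ Real.sqrt 2 := by nlinarith
  have hs2ub : Real.sqrt 2 ≤ 1.5 := by nlinarith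
  have hα0 : 0 ≤ α := by rw [hαdef]; nlinarith
  have hα1 : α ≤ 1 := by rw [hαdef]; nlinarith
  have hfchat : ∀ i, 0 ≤ f i (chat i) := fun i => hnonneg i _ (hchatmem i)
  -- any valid assignment is bounded by the super-optimal value
  have hc'le : ∀ i, c' i ≤ C := by
    intro i
    calc c' i ≤ ∑ k ∈ Finset.univ.filter (fun k => r' k = r' i), c' k :=
          Finset.single_le_sum (fun k _ => hc'0 k) (by simp)
      _ ≤ C := hc'cap (r' i)
  have hc'sum : ∑ i, c' i ≤ (m : ℝ) * C := by
    rw [← Finset.sum_fiberwise_of_maps_to (fun i _ => Finset.mem_univ (r' i)) c']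
    calc ∑ j : Fin m, ∑ i ∈ Finset.univ.filter (fun i => r' i = j), c' i
        ≤ ∑ _j : Fin m, C := Finset.sum_le_sum fun j _ => hc'cap j
      _ = (m : ℝ) * C := by simp [Finset.card_univ]
  have hopt : ∑ i, f i (c' i) ≤ ∑ i, f i (chat i) :=
    hchatmax c' (fun i => ⟨hc'0 i, hc'le i⟩) hc'sum
  -- splitting sums over D and E
  have hcompl : E = Dᶜ := by
    ext i; simp [hE i, hD i, Finset.mem_compl]
  have hsplit : ∀ g : Fin n → ℝ, ∑ i, g i = ∑ i ∈ D, g i + ∑ i ∈ E, g i := by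
    intro g; rw [hcompl]; exact (Finset.sum_add_sum_compl D g).symm
  set SD : ℝ := ∑ i ∈ D, f i (chat i) with hSDdef
  set SE : ℝ := ∑ i ∈ E, f i (chat i) with hSEdef
  have hSD0 : 0 ≤ SD := Finset.sum_nonneg fun i _ => hfchat i
  have hSE0 : 0 ≤ SE := Finset.sum_nonneg fun i _ => hfchat i
  have hoptsplit : ∑ i, f i (chat i) = SD + SE := hsplit _
  -- on D, the algorithm gets the full value
  have hDval : ∑ i ∈ D, f i (c i) = SD := by
    refine Finset.sum_congr rfl fun i hi => by rw [(hD i).1 hi]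
  set A : ℝ := ∑ i ∈ E, f i (c i) with hAdef
  have hA0 : 0 ≤ A := Finset.sum_nonneg fun i _ =>
    hnonneg i _ ⟨hc i, (hcle i).trans (hchatmem i).2⟩
  have hALG : ∑ i, f i (c i) = SD + A := by rw [hsplit (fun i => f i (c i)), hDval]
  -- chat is positive on E
  have hchatposE : ∀ i ∈ E, 0 < chat i := by
    intro i hi
    rcases lt_or_eq_of_le ((hc i).trans (hcle i)) with h | h
    · exact h
    · exact absurd ((le_antisymm (hcle i) (by rw [← h]; exact hc i))) ((hE i).1 hi)
  -- it suffices to bound against the super-optimal value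
  have hmain : SD + A ≥ α * (SD + SE) := by
    -- γ is nonnegative
    have hγ0 : 0 ≤ γ := by
      rcases Finset.eq_empty_or_nonempty E with hEe | hEne
      · rw [hγzero hEe]
      · obtain ⟨i, hi, hγeq⟩ := hγmem hEne
        rw [hγeq]; exact hfchat i
    rcases eq_or_lt_of_le hγ0 with hγeq | hγpos
    · -- γ = 0 : all values on E vanish
      have hSEzero : SE = 0 := by
        rw [hSEdef]
        refine Finset.sum_eq_zero fun i hi =>
          le_antisymm (le_trans (hγub i hi) (le_of_eq hγeq.symm)) (hfchat i)
      rw [hSEzero, add_zero]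
      nlinarith
    · -- γ > 0 : E is nonempty
      have hEne : E.Nonempty := by
        rcases Finset.eq_empty_or_nonempty E with hEe | h
        · exact absurd (hγzero hEe) (ne_of_gt hγpos)
        · exact h
      have hk0 : (0:ℝ) < E.card := by
        exact_mod_cast Finset.card_pos.2 hEne
      set s : Fin n → ℝ := fun i => f i (chat i) / chat i with hsdef
      have hs0 : ∀ i ∈ E, 0 ≤ s i := fun i hi =>
        div_nonneg (hfchat i) (hchatposE i hi).le
      have hsE0 : 0 ≤ ∑ i ∈ E, s i := Finset.sum_nonneg hs0
      -- concavity: f i (c i) ≥ s i * c i on E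
      have hconcE : ∀ i ∈ E, s i * c i ≤ f i (c i) := by
        intro i hi
        have hchp := hchatposE i hi
        set t : ℝ := c i / chat i with htdef
        have ht0 : 0 ≤ t := div_nonneg (hc i) hchp.le
        have ht1 : t ≤ 1 := div_le_one_of_le₀ (hcle i) hchp.le
        have h0mem : (0:ℝ) ∈ Set.Icc (0:ℝ) C := ⟨le_refl 0, hC.le⟩
        have := (hconc i).2 h0mem (hchatmem i) (by linarith : 0 ≤ 1 - t) ht0
          (by ring)
        simp only [smul_eq_mul, mul_zero, zero_add] at this
        have hct : t * chat i = c i := div_mul_cancel₀ (c i) (ne_of_gt hchp)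
        rw [hct] at this
        have hf0 : 0 ≤ f i 0 := hnonneg i 0 h0mem
        have hst : s i * c i = t * f i (chat i) := by
          rw [hsdef, htdef]; field_simp
        nlinarith
      -- Chebyshev's sum inequality from hypothesis (c)
      have hmv : MonovaryOn s c (E : Set (Fin n)) := by
        intro i hi j hj hlt
        by_contra hcon
        push_neg at hcon
        exact absurd (hslope i (by simpa using hi) j (by simpa using hj) hcon)
          (not_le.2 hlt)
      have hcheb : (∑ i ∈ E, s i) * (∑ i ∈ E, c i) ≤
          (E.card : ℝ) * ∑ i ∈ E, s i * c i := by
        have := hmv.sum_mul_sum_le_card_mul_sum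
        simpa using this
      -- combine with hypothesis (b)
      have hkey1 : (∑ i ∈ E, s i) * (∑ i ∈ E, chat i) ≤ (m:ℝ) * ∑ i ∈ E, s i * c i := by
        have h1 : (E.card : ℝ) * ((∑ i ∈ E, s i) * (∑ i ∈ E, chat i)) ≤
            (E.card : ℝ) * ((m:ℝ) * ∑ i ∈ E, s i * c i) := by
          calc (E.card : ℝ) * ((∑ i ∈ E, s i) * (∑ i ∈ E, chat i))
              = (∑ i ∈ E, s i) * ((E.card : ℝ) * ∑ i ∈ E, chat i) := by ring
            _ ≤ (∑ i ∈ E, s i) * ((m:ℝ) * ∑ i ∈ E, c i) :=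
                mul_le_mul_of_nonneg_left hb hsE0
            _ = (m:ℝ) * ((∑ i ∈ E, s i) * (∑ i ∈ E, c i)) := by ring
            _ ≤ (m:ℝ) * ((E.card : ℝ) * ∑ i ∈ E, s i * c i) :=
                mul_le_mul_of_nonneg_left hcheb (by positivity)
            _ = (E.card : ℝ) * ((m:ℝ) * ∑ i ∈ E, s i * c i) := by ring
        exact le_of_mul_le_mul_left h1 hk0
      -- Cauchy–Schwarz: SE² ≤ γ ⬝ (Σ s)(Σ chat)
      have hkey2 : SE ^ 2 ≤ γ * ((∑ i ∈ E, s i) * (∑ i ∈ E, chat i)) := by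
        have hcs := Finset.sum_mul_sq_le_sq_mul_sq E
          (fun i => Real.sqrt (s i)) (fun i => Real.sqrt (chat i))
        have heq1 : ∀ i ∈ E, Real.sqrt (s i) * Real.sqrt (chat i) =
            Real.sqrt (f i (chat i)) := by
          intro i hi
          rw [← Real.sqrt_mul (hs0 i hi), hsdef,
            div_mul_cancel₀ _ (ne_of_gt (hchatposE i hi))]
        have heq2 : ∀ i ∈ E, Real.sqrt (s i) ^ 2 = s i := fun i hi =>
          Real.sq_sqrt (hs0 i hi)
        have heq3 : ∀ i ∈ E, Real.sqrt (chat i) ^ 2 = chat i := fun i hi =>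
          Real.sq_sqrt (hchatposE i hi).le
        rw [Finset.sum_congr rfl heq1, Finset.sum_congr rfl heq2,
          Finset.sum_congr rfl heq3] at hcs
        have hSEle : SE ≤ Real.sqrt γ * ∑ i ∈ E, Real.sqrt (f i (chat i)) := by
          rw [hSEdef, Finset.mul_sum]
          exact Finset.sum_le_sum fun i hi =>
            greedy_sqrt_aux _ _ (hfchat i) (hγub i hi)
        have hsqs0 : 0 ≤ ∑ i ∈ E, Real.sqrt (f i (chat i)) :=
          Finset.sum_nonneg fun i _ => Real.sqrt_nonneg _
        exact greedy_cs_aux _ _ _ _ hSE0 hSEle hsqs0 hcs hγ0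
      -- putting things together: SE² ≤ (m γ) A
      have hkey3 : SE ^ 2 ≤ ((m:ℝ) * γ) * A := by
        have hAc : ∑ i ∈ E, s i * c i ≤ A :=
          Finset.sum_le_sum hconcE
        have hm0 : (0:ℝ) ≤ m := Nat.cast_nonneg m
        calc SE ^ 2 ≤ γ * ((∑ i ∈ E, s i) * (∑ i ∈ E, chat i)) := hkey2
          _ ≤ γ * ((m:ℝ) * ∑ i ∈ E, s i * c i) :=
              mul_le_mul_of_nonneg_left hkey1 hγ0
          _ ≤ γ * ((m:ℝ) * A) := by
              refine mul_le_mul_of_nonneg_left ?_ hγ0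
              exact mul_le_mul_of_nonneg_left hAc hm0
          _ = ((m:ℝ) * γ) * A := by ring
      -- final algebra
      set g : ℝ := (m:ℝ) * γ with hgdef
      have hg0 : 0 < g := by
        have : (1:ℝ) ≤ m := by exact_mod_cast hm
        rw [hgdef]; positivity
      have hgSD : g ≤ SD := ha
      rw [hαdef]
      exact greedy_quad_aux g SD SE A hg0 hgSD hSE0 hkey3
  calc 2 * (Real.sqrt 2 - 1) * ∑ i, f i (c' i) = α * ∑ i, f i (c' i) := by rw [hαdef]
    _ ≤ α * (SD + SE) := by
        rw [← hoptsplit]; exact mul_le_mul_of_nonneg_left hopt hα0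
    _ ≤ SD + A := hmain
    _ = ∑ i, f i (c i) := hALG.symm
end

section
/- Consider 2 servers each with capacity 1, and 3 threads with utility functions f_1(x) = f_2(x) = min(2x, 1) and f_3(x) = x on [0,1]. Then: (a) every valid assignment (r_i ∈ {1,2}, c_i ≥ 0 with Σ_{i : r_i = j} c_i ≤ 1 for j = 1,2) has total utility f_1(c_1) + f_2(c_2) + f_3(c_3) ≤ 3, and the valid assignment placing threads 1 and 2 on server 1 with 1/2 resource each and thread 3 on server 2 with 1 resource achieves total utility exactly 3; (b) the assignment r = (1, 2, 1), c = (1/2, 1/2, 1/2) is valid and has total utility exactly 5/2 = (5/6)·3. -/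
/-- Near-tightness instance for the greedy algorithm: 2 servers of capacity 1
and 3 threads with utilities `min(2x,1)`, `min(2x,1)`, `x`. (a) Every valid
assignment has total utility at most 3, and placing threads 1, 2 on server 1
with 1/2 each and thread 3 on server 2 with 1 achieves exactly 3. (b) The
assignment `r = (1,2,1)`, `c = (1/2,1/2,1/2)` is valid and achieves total
utility exactly 5/2 = (5/6)·3. -/
theorem greedy_tightness_instance :
    let f : Fin 3 → ℝ → ℝ :=
      ![fun x => min (2 * x) 1, fun x => min (2 * x) 1, fun x => x]
    -- (a) optimal utility is 3
    ((∀ (r : Fin 3 → Fin 2) (c : Fin 3 → ℝ), (∀ i, 0 ≤ c i) →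
        (∀ j : Fin 2, ∑ i ∈ Finset.univ.filter (fun i => r i = j), c i ≤ 1) →
        ∑ i, f i (c i) ≤ 3) ∧
      ((∀ i, (0 : ℝ) ≤ (![1/2, 1/2, 1] : Fin 3 → ℝ) i) ∧
        (∀ j : Fin 2, ∑ i ∈ Finset.univ.filter
            (fun i => (![0, 0, 1] : Fin 3 → Fin 2) i = j),
            (![1/2, 1/2, 1] : Fin 3 → ℝ) i ≤ 1) ∧
        ∑ i, f i ((![1/2, 1/2, 1] : Fin 3 → ℝ) i) = 3)) ∧
    -- (b) the assignment r = (1,2,1), c = (1/2,1/2,1/2) is valid with utility 5/2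
    ((∀ i, (0 : ℝ) ≤ (![1/2, 1/2, 1/2] : Fin 3 → ℝ) i) ∧
      (∀ j : Fin 2, ∑ i ∈ Finset.univ.filter
          (fun i => (![0, 1, 0] : Fin 3 → Fin 2) i = j),
          (![1/2, 1/2, 1/2] : Fin 3 → ℝ) i ≤ 1) ∧
      ∑ i, f i ((![1/2, 1/2, 1/2] : Fin 3 → ℝ) i) = 5 / 2 ∧
      (5 / 2 : ℝ) = (5 / 6) * 3) := by
  intro f
  refine ⟨⟨?_, ?_, ?_, ?_⟩, ?_, ?_, ?_, by norm_num⟩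
  · intro r c hc hcap
    have h2 : c 2 ≤ 1 := by
      refine le_trans ?_ (hcap (r 2))
      exact Finset.single_le_sum (fun i _ => hc i)
        (by simp)
    have e : ∑ i, f i (c i) = min (2 * c 0) 1 + min (2 * c 1) 1 + c 2 := by
      simp [f, Fin.sum_univ_three]
    rw [e]
    have := min_le_right (2 * c 0) 1
    have := min_le_right (2 * c 1) 1
    linarith
  · intro i; fin_cases i <;> norm_num
  · intro j; fin_cases j <;> · rw [Finset.sum_filter]; norm_num [Fin.sum_univ_three, Matrix.cons_val_two, Matrix.vecHead, Matrix.vecTail]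
  · simp [f, Fin.sum_univ_three, Matrix.vecHead, Matrix.vecTail]; norm_num
  · intro i; fin_cases i <;> norm_num
  · intro j; fin_cases j <;> · rw [Finset.sum_filter]; norm_num [Fin.sum_univ_three, Matrix.cons_val_two, Matrix.vecHead, Matrix.vecTail]
  · simp [f, Fin.sum_univ_three, Matrix.vecHead, Matrix.vecTail]; norm_num
end
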